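/- Let c, c' be integers and define the binary relation R on finite sets of integers by: R A B holds iff A is nonempty, A = B ∪ {min A, max A}, and c ≤ max A − min A ≤ c'. Then for all finite sets of integers A and A', the reflexive–transitive closure of R relates A to A' if and only if A = A', or there exist finite sets of integers A₁, A₂, A₃ such that: A₂ is nonempty, A₂ = A' ∪ {min A₂, max A₂}, A = A₁ ∪ A₂ ∪ A₃, c ≤ max A − min A ≤ c', c ≤ max A₂ − min A₂ ≤ c', if A₁ is nonempty then max A₁ < min A₂, and if A₃ is nonempty then max A₂ < min A₃. -/
import Mathlib


/-- Minimum of a finite set of integers (default 0 on the empty set). -/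
def zmin (A : Finset ℤ) : ℤ := if h : A.Nonempty then A.min' h else 0

/-- Maximum of a finite set of integers (default 0 on the empty set). -/
def zmax (A : Finset ℤ) : ℤ := if h : A.Nonempty then A.max' h else 0

lemma zmin_le {A : Finset ℤ} {a : ℤ} (h : a ∈ A) : zmin A ≤ a := by
  rw [zmin, dif_pos ⟨a, h⟩]; exact Finset.min'_le _ _ h

lemma le_zmax {A : Finset ℤ} {a : ℤ} (h : a ∈ A) : a ≤ zmax A := by
  rw [zmax, dif_pos ⟨a, h⟩]; exact Finset.le_max' _ _ h

lemma zmin_mem {A : Finset ℤ} (h : A.Nonempty) : zmin A ∈ A := by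
  rw [zmin, dif_pos h]; exact A.min'_mem h

lemma zmax_mem {A : Finset ℤ} (h : A.Nonempty) : zmax A ∈ A := by
  rw [zmax, dif_pos h]; exact A.max'_mem h

lemma chain_aux (c c' : ℤ) (A A' A₂ : Finset ℤ) (h2 : A₂.Nonempty)
    (h2eq : A₂ = A' ∪ {zmin A₂, zmax A₂})
    (hub : zmax A - zmin A ≤ c')
    (hlb : c ≤ zmax A₂ - zmin A₂)
    (hsep : ∀ x ∈ A, x ∉ A₂ → x < zmin A₂ ∨ zmax A₂ < x) :
    ∀ n X, X.card ≤ n → A₂ ⊆ X → X ⊆ A →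
      Relation.ReflTransGen
        (fun X Y : Finset ℤ => X.Nonempty ∧ X = Y ∪ {zmin X, zmax X} ∧
          c ≤ zmax X - zmin X ∧ zmax X - zmin X ≤ c') X A' := by
  intro n
  induction n with
  | zero =>
    intro X hcard hsub hsubA
    exfalso
    have hXne : X.Nonempty := h2.mono hsub
    have := Finset.card_pos.mpr hXne
    omega
  | succ n ih =>
    intro X hcard hsub hsubA
    have hXne : X.Nonempty := h2.mono hsub
    have hmin2 : zmin X ≤ zmin A₂ := zmin_le (hsub (zmin_mem h2))
    have hmax2 : zmax A₂ ≤ zmax X := le_zmax (hsub (zmax_mem h2))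
    have hminA : zmin A ≤ zmin X := zmin_le (hsubA (zmin_mem hXne))
    have hmaxA : zmax X ≤ zmax A := le_zmax (hsubA (zmax_mem hXne))
    have hbX1 : c ≤ zmax X - zmin X := by linarith
    have hbX2 : zmax X - zmin X ≤ c' := by linarith
    by_cases hXA2 : X = A₂
    · subst hXA2
      exact Relation.ReflTransGen.single ⟨hXne, h2eq, hbX1, hbX2⟩
    · obtain ⟨x, hxX, hx2⟩ := Finset.exists_of_ssubset (hsub.ssubset_of_ne (Ne.symm hXA2))
      set Y : Finset ℤ := (X \ {zmin X, zmax X}) ∪ A₂ with hY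
      have hA2Y : A₂ ⊆ Y := Finset.subset_union_right
      have hYX : Y ⊆ X := Finset.union_subset (Finset.sdiff_subset) hsub
      have hXeq : X = Y ∪ {zmin X, zmax X} := by
        apply subset_antisymm
        · intro a ha
          by_cases hend : a ∈ ({zmin X, zmax X} : Finset ℤ)
          · exact Finset.mem_union_right _ hend
          · exact Finset.mem_union_left _ (Finset.mem_union_left _ (Finset.mem_sdiff.mpr ⟨ha, hend⟩))
        · apply Finset.union_subset hYX
          intro a ha
          simp only [Finset.mem_insert, Finset.mem_singleton] at ha
          rcases ha with rfl | rfl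
          · exact zmin_mem hXne
          · exact zmax_mem hXne
      -- find element of X not in Y
      have hexists : ∃ e ∈ X, e ∉ Y := by
        rcases hsep x (hsubA hxX) hx2 with hlt | hgt
        · refine ⟨zmin X, zmin_mem hXne, ?_⟩
          have hxmin : zmin X < zmin A₂ := lt_of_le_of_lt (zmin_le hxX) hlt
          intro hmem
          rcases Finset.mem_union.mp hmem with hm | hm
          · exact (Finset.mem_sdiff.mp hm).2 (by simp)
          · have := zmin_le hm
            omega
        · refine ⟨zmax X, zmax_mem hXne, ?_⟩
          have hxmax : zmax A₂ < zmax X := lt_of_lt_of_le hgt (le_zmax hxX)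
          intro hmem
          rcases Finset.mem_union.mp hmem with hm | hm
          · exact (Finset.mem_sdiff.mp hm).2 (by simp)
          · have := le_zmax hm
            omega
      obtain ⟨e, heX, heY⟩ := hexists
      have hcardlt : Y.card < X.card :=
        Finset.card_lt_card ((Finset.ssubset_iff_of_subset hYX).mpr ⟨e, heX, heY⟩)
      exact Relation.ReflTransGen.head ⟨hXne, hXeq, hbX1, hbX2⟩
        (ih Y (by omega) hA2Y (hYX.trans hsubA))

theorem stmt_14 (c c' : ℤ) (A A' : Finset ℤ) :
    Relation.ReflTransGen
      (fun X Y : Finset ℤ => X.Nonempty ∧ X = Y ∪ {zmin X, zmax X} ∧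
        c ≤ zmax X - zmin X ∧ zmax X - zmin X ≤ c') A A' ↔
    (A = A' ∨
      ∃ A₁ A₂ A₃ : Finset ℤ, A₂.Nonempty ∧
        A₂ = A' ∪ {zmin A₂, zmax A₂} ∧
        A = A₁ ∪ A₂ ∪ A₃ ∧
        c ≤ zmax A - zmin A ∧ zmax A - zmin A ≤ c' ∧
        c ≤ zmax A₂ - zmin A₂ ∧ zmax A₂ - zmin A₂ ≤ c' ∧
        (A₁.Nonempty → zmax A₁ < zmin A₂) ∧
        (A₃.Nonempty → zmax A₂ < zmin A₃)) := by
  constructor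
  · intro h
    induction h with
    | refl => exact Or.inl rfl
    | @tail B C hAB hstep ih =>
      obtain ⟨hBne, hBeq, hb1, hb2⟩ := hstep
      rcases ih with rfl | ⟨A₁, A₂, A₃, h2ne, h2eq, hAeq, hc1, hc2, hc3, hc4, hs1, hs3⟩
      · right
        exact ⟨∅, A, ∅, hBne, hBeq, by simp, hb1, hb2, hb1, hb2,
          fun h => absurd h (by simp), fun h => absurd h (by simp)⟩
      · right
        have hB2 : B ⊆ A₂ := h2eq ▸ Finset.subset_union_left
        have hA2A : A₂ ⊆ A := by
          rw [hAeq]; exact Finset.subset_union_right.trans Finset.subset_union_left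
        have hBA : B ⊆ A := hB2.trans hA2A
        have hminle : zmin A₂ ≤ zmin B := zmin_le (hB2 (zmin_mem hBne))
        have hmaxge : zmax B ≤ zmax A₂ := le_zmax (hB2 (zmax_mem hBne))
        refine ⟨A.filter (· < zmin B), B, A.filter (zmax B < ·), hBne, hBeq, ?_, hc1, hc2,
          hb1, hb2, ?_, ?_⟩
        · apply subset_antisymm
          · intro a ha
            by_cases h1 : a < zmin B
            · exact Finset.mem_union_left _ (Finset.mem_union_left _
                (Finset.mem_filter.mpr ⟨ha, h1⟩))
            by_cases h3 : zmax B < a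
            · exact Finset.mem_union_right _ (Finset.mem_filter.mpr ⟨ha, h3⟩)
            apply Finset.mem_union_left
            apply Finset.mem_union_right
            rw [hAeq] at ha
            rcases Finset.mem_union.mp ha with ha | ha3
            · rcases Finset.mem_union.mp ha with ha1 | ha2
              · exfalso
                have := le_zmax ha1
                have := hs1 ⟨a, ha1⟩
                omega
              · rw [h2eq] at ha2
                rcases Finset.mem_union.mp ha2 with haB' | hend
                · exact haB'
                · simp only [Finset.mem_insert, Finset.mem_singleton] at hend
                  have hab : a = zmin B ∨ a = zmax B := by omega
                  rcases hab with h | h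
                  · rw [h]; exact zmin_mem hBne
                  · rw [h]; exact zmax_mem hBne
            · exfalso
              have := zmin_le ha3
              have := hs3 ⟨a, ha3⟩
              omega
          · refine Finset.union_subset (Finset.union_subset ?_ hBA) ?_
            · exact Finset.filter_subset _ _
            · exact Finset.filter_subset _ _
        · intro hne
          exact (Finset.mem_filter.mp (zmax_mem hne)).2
        · intro hne
          exact (Finset.mem_filter.mp (zmin_mem hne)).2
  · rintro (rfl | ⟨A₁, A₂, A₃, h2ne, h2eq, hAeq, hc1, hc2, hc3, hc4, hs1, hs3⟩)
    · exact Relation.ReflTransGen.refl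
    · have hA2A : A₂ ⊆ A := by
          rw [hAeq]; exact Finset.subset_union_right.trans Finset.subset_union_left
      refine chain_aux c c' A A' A₂ h2ne h2eq hc2 hc3 ?_ A.card A le_rfl hA2A subset_rfl
      intro x hx hx2
      rw [hAeq] at hx
      rcases Finset.mem_union.mp hx with hx' | hx3
      · rcases Finset.mem_union.mp hx' with hx1 | hx2'
        · left
          have := le_zmax hx1
          have := hs1 ⟨x, hx1⟩
          omega
        · exact absurd hx2' hx2
      · right
        have := zmin_le hx3
        have := hs3 ⟨x, hx3⟩
        omega
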